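/- arXiv:2112.14247 — 3 statements merged into one kernel-verified Lean document; each statement's English description precedes it below -/
import Mathlib

section
/- Let μ̃ be another finite Borel measure on T and π̃ : T → ℝ^{d×d} another Borel measurable function whose values are symmetric positive semidefinite matrices μ̃-almost everywhere. Assume that for all i, j ∈ {1,…,d} and every Borel set A ⊆ T one has ∫_A π_{i,j}(s) μ(ds) = ∫_A π̃_{i,j}(s) μ̃(ds). Then for every Borel measurable f : T → ℝ^d, ∫_T f(s)ᵀ π(s) f(s) μ(ds) = ∫_T f(s)ᵀ π̃(s) f(s) μ̃(ds) (as values in [0,∞]); in particular the seminorm ‖·‖_{Λ²} does not depend on the choice of the pair (π, μ) representing the same matrix-valued measure. -/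
open MeasureTheory Matrix ENNReal

lemma quadForm_eq {d : ℕ} (M : Matrix (Fin d) (Fin d) ℝ) (x : Fin d → ℝ) :
    x ⬝ᵥ M *ᵥ x = ∑ i, ∑ j, x i * x j * M i j := by
  simp only [dotProduct, Matrix.mulVec, Finset.mul_sum]
  exact Finset.sum_congr rfl fun i _ => Finset.sum_congr rfl fun j _ => by ring

lemma meas_quad {d : ℕ} (π : ℝ → Matrix (Fin d) (Fin d) ℝ)
    (hπm : ∀ i j, Measurable fun s => π s i j) (f : ℝ → Fin d → ℝ) (hf : Measurable f) :
    Measurable fun s => f s ⬝ᵥ π s *ᵥ f s := by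
  simp only [quadForm_eq]
  apply Finset.measurable_sum; intro i _
  apply Finset.measurable_sum; intro j _
  exact (((measurable_pi_apply i).comp hf).mul ((measurable_pi_apply j).comp hf)).mul (hπm i j)

lemma cont_quad {d : ℕ} (M : Matrix (Fin d) (Fin d) ℝ) :
    Continuous fun x : Fin d → ℝ => x ⬝ᵥ M *ᵥ x := by
  simp only [quadForm_eq]
  exact continuous_finset_sum _ fun i _ => continuous_finset_sum _ fun j _ =>
    ((continuous_apply i).mul (continuous_apply j)).mul continuous_const

lemma ofReal_sum_le' {α : Type*} (s : Finset α) (f : α → ℝ) :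
    ENNReal.ofReal (∑ i ∈ s, f i) ≤ ∑ i ∈ s, ENNReal.ofReal (f i) := by
  induction s using Finset.cons_induction with
  | empty => simp
  | cons a s ha ih =>
    rw [Finset.sum_cons, Finset.sum_cons]
    exact (ENNReal.ofReal_add_le).trans (add_le_add le_rfl ih)

lemma bound_fin_aux {d : ℕ} (K : ℝ) (ρ : ℝ → Matrix (Fin d) (Fin d) ℝ) (m : Measure ℝ)
    (hρ : ∀ i j, Measurable fun s => ρ s i j)
    (hi : ∀ i j, Integrable (fun s => ρ s i j) m) :
    ∫⁻ s, ∑ i : Fin d, ∑ j : Fin d, ENNReal.ofReal (K * |ρ s i j|) ∂m ≠ ⊤ := by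
  rw [lintegral_finset_sum _ (fun i _ => Finset.measurable_sum _ fun j _ =>
    ((hρ i j).abs.const_mul _).ennreal_ofReal)]
  refine (ENNReal.sum_lt_top.2 fun i _ => ?_).ne
  rw [lintegral_finset_sum _ (fun j _ => ((hρ i j).abs.const_mul _).ennreal_ofReal)]
  refine ENNReal.sum_lt_top.2 fun j _ => ?_
  exact ((hi i j).abs.const_mul _).lintegral_lt_top

/-- Independence of the `Λ²`-seminorm of the representing pair `(π, μ)` of the
matrix-valued covariation measure. -/
theorem stmt_3 {d : ℕ} (u : ℝ) (hu : 0 < u)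
    (μ μ' : Measure ℝ) [IsFiniteMeasure μ] [IsFiniteMeasure μ']
    (π π' : ℝ → Matrix (Fin d) (Fin d) ℝ)
    (hπm : ∀ i j : Fin d, Measurable fun s => π s i j)
    (hπ'm : ∀ i j : Fin d, Measurable fun s => π' s i j)
    (hπ : ∀ᵐ s ∂(μ.restrict (Set.Icc 0 u)), (π s).PosSemidef)
    (hπ' : ∀ᵐ s ∂(μ'.restrict (Set.Icc 0 u)), (π' s).PosSemidef)
    (hint : ∀ i j : Fin d, Integrable (fun s => π s i j) (μ.restrict (Set.Icc 0 u)))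
    (hint' : ∀ i j : Fin d, Integrable (fun s => π' s i j) (μ'.restrict (Set.Icc 0 u)))
    (heq : ∀ i j : Fin d, ∀ A : Set ℝ, MeasurableSet A → A ⊆ Set.Icc 0 u →
      ∫ s in A, π s i j ∂μ = ∫ s in A, π' s i j ∂μ')
    (f : ℝ → Fin d → ℝ) (hf : Measurable f) :
    ∫⁻ s in Set.Icc 0 u, ENNReal.ofReal (f s ⬝ᵥ ((π s) *ᵥ f s)) ∂μ =
      ∫⁻ s in Set.Icc 0 u, ENNReal.ofReal (f s ⬝ᵥ ((π' s) *ᵥ f s)) ∂μ' := by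
  have hIcc : MeasurableSet (Set.Icc (0:ℝ) u) := measurableSet_Icc
  set ν := μ.restrict (Set.Icc 0 u) with hν
  set ν' := μ'.restrict (Set.Icc 0 u) with hν'
  -- Key: for constant vectors, the lintegrals over any measurable set agree.
  have key : ∀ (c : Fin d → ℝ) (A : Set ℝ), MeasurableSet A →
      ∫⁻ s in A, ENNReal.ofReal (c ⬝ᵥ π s *ᵥ c) ∂ν
        = ∫⁻ s in A, ENNReal.ofReal (c ⬝ᵥ π' s *ᵥ c) ∂ν' := by
    intro c A hA
    rw [hν, hν', Measure.restrict_restrict hA, Measure.restrict_restrict hA]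
    set B := A ∩ Set.Icc 0 u with hB
    have hBm : MeasurableSet B := hA.inter hIcc
    have hBsub : B ⊆ Set.Icc 0 u := Set.inter_subset_right
    have hi : Integrable (fun s => c ⬝ᵥ π s *ᵥ c) (μ.restrict B) := by
      simp only [quadForm_eq]
      apply integrable_finset_sum; intro i _
      apply integrable_finset_sum; intro j _
      exact (((hint i j).mono_measure (Measure.restrict_mono hBsub le_rfl)).const_mul
        (c i * c j))
    have hi' : Integrable (fun s => c ⬝ᵥ π' s *ᵥ c) (μ'.restrict B) := by
      simp only [quadForm_eq]
      apply integrable_finset_sum; intro i _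
      apply integrable_finset_sum; intro j _
      exact (((hint' i j).mono_measure (Measure.restrict_mono hBsub le_rfl)).const_mul
        (c i * c j))
    have hpos : 0 ≤ᵐ[μ.restrict B] fun s => c ⬝ᵥ π s *ᵥ c := by
      filter_upwards [ae_restrict_of_ae_restrict_of_subset hBsub hπ] with s hs
      simpa using hs.dotProduct_mulVec_nonneg c
    have hpos' : 0 ≤ᵐ[μ'.restrict B] fun s => c ⬝ᵥ π' s *ᵥ c := by
      filter_upwards [ae_restrict_of_ae_restrict_of_subset hBsub hπ'] with s hs
      simpa using hs.dotProduct_mulVec_nonneg c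
    rw [← ofReal_integral_eq_lintegral_ofReal hi hpos,
      ← ofReal_integral_eq_lintegral_ofReal hi' hpos']
    congr 1
    simp only [quadForm_eq]
    rw [integral_finset_sum _ (fun i _ => by
        apply integrable_finset_sum; intro j _
        exact ((hint i j).mono_measure (Measure.restrict_mono hBsub le_rfl)).const_mul _),
      integral_finset_sum _ (fun i _ => by
        apply integrable_finset_sum; intro j _
        exact ((hint' i j).mono_measure (Measure.restrict_mono hBsub le_rfl)).const_mul _)]
    refine Finset.sum_congr rfl fun i _ => ?_
    rw [integral_finset_sum _ (fun j _ =>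
        ((hint i j).mono_measure (Measure.restrict_mono hBsub le_rfl)).const_mul _),
      integral_finset_sum _ (fun j _ =>
        ((hint' i j).mono_measure (Measure.restrict_mono hBsub le_rfl)).const_mul _)]
    refine Finset.sum_congr rfl fun j _ => ?_
    rw [integral_const_mul, integral_const_mul, heq i j B hBm hBsub]
  -- Simple functions
  have hsimple : ∀ φ : SimpleFunc ℝ (Fin d → ℝ),
      ∫⁻ s, ENNReal.ofReal (φ s ⬝ᵥ π s *ᵥ φ s) ∂ν
        = ∫⁻ s, ENNReal.ofReal (φ s ⬝ᵥ π' s *ᵥ φ s) ∂ν' := by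
    intro φ
    have expand : ∀ (ρ : ℝ → Matrix (Fin d) (Fin d) ℝ) (s : ℝ),
        ENNReal.ofReal (φ s ⬝ᵥ ρ s *ᵥ φ s)
          = ∑ c ∈ φ.range, (φ ⁻¹' {c}).indicator
              (fun t => ENNReal.ofReal (c ⬝ᵥ ρ t *ᵥ c)) s := by
      intro ρ s
      rw [Finset.sum_eq_single_of_mem (φ s) (φ.mem_range_self s)]
      · rw [Set.indicator_of_mem (by simp : s ∈ φ ⁻¹' {φ s})]
      · intro b _ hb
        exact Set.indicator_of_notMem (by simp [hb.symm]) _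
    have hmeas : ∀ (ρ : ℝ → Matrix (Fin d) (Fin d) ℝ)
        (_ : ∀ i j, Measurable fun s => ρ s i j) (c : Fin d → ℝ),
        Measurable ((φ ⁻¹' {c}).indicator fun t => ENNReal.ofReal (c ⬝ᵥ ρ t *ᵥ c)) := by
      intro ρ hρ c
      exact ((meas_quad ρ hρ (fun _ => c) measurable_const).ennreal_ofReal).indicator
        (φ.measurableSet_fiber c)
    simp only [expand]
    rw [lintegral_finset_sum _ (fun c _ => hmeas π hπm c),
      lintegral_finset_sum _ (fun c _ => hmeas π' hπ'm c)]
    refine Finset.sum_congr rfl fun c _ => ?_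
    rw [lintegral_indicator (φ.measurableSet_fiber c),
      lintegral_indicator (φ.measurableSet_fiber c)]
    exact key c _ (φ.measurableSet_fiber c)
  -- Bounded measurable functions
  have hbdd : ∀ (g : ℝ → Fin d → ℝ), Measurable g → ∀ C : ℝ, (∀ s, ‖g s‖ ≤ C) →
      ∫⁻ s, ENNReal.ofReal (g s ⬝ᵥ π s *ᵥ g s) ∂ν
        = ∫⁻ s, ENNReal.ofReal (g s ⬝ᵥ π' s *ᵥ g s) ∂ν' := by
    intro g hg C hC
    have hC0 : 0 ≤ C := le_trans (norm_nonneg _) (hC 0)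
    set φ : ℕ → SimpleFunc ℝ (Fin d → ℝ) :=
      fun n => SimpleFunc.approxOn g hg Set.univ 0 (Set.mem_univ 0) n with hφ
    have hφ_tendsto : ∀ s, Filter.Tendsto (fun n => φ n s) Filter.atTop (nhds (g s)) :=
      fun s => SimpleFunc.tendsto_approxOn hg _ (by simp)
    have hφ_norm : ∀ n s, ‖φ n s‖ ≤ 2 * C := by
      intro n s
      calc ‖φ n s‖ ≤ ‖g s‖ + ‖g s‖ := SimpleFunc.norm_approxOn_zero_le hg _ s n
        _ ≤ C + C := add_le_add (hC s) (hC s)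
        _ = 2 * C := by ring
    have hptbd : ∀ (ρ : ℝ → Matrix (Fin d) (Fin d) ℝ) (x : Fin d → ℝ) (s : ℝ),
        ‖x‖ ≤ 2 * C →
        ENNReal.ofReal (x ⬝ᵥ ρ s *ᵥ x)
          ≤ ∑ i : Fin d, ∑ j : Fin d, ENNReal.ofReal ((2 * C) * (2 * C) * |ρ s i j|) := by
      intro ρ x s hx
      rw [quadForm_eq]
      calc ENNReal.ofReal (∑ i, ∑ j, x i * x j * ρ s i j)
          ≤ ∑ i : Fin d, ENNReal.ofReal (∑ j, x i * x j * ρ s i j) := ofReal_sum_le' _ _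
        _ ≤ ∑ i : Fin d, ∑ j : Fin d, ENNReal.ofReal (x i * x j * ρ s i j) :=
            Finset.sum_le_sum fun i _ => ofReal_sum_le' _ _
        _ ≤ ∑ i : Fin d, ∑ j : Fin d, ENNReal.ofReal ((2 * C) * (2 * C) * |ρ s i j|) := by
            refine Finset.sum_le_sum fun i _ => Finset.sum_le_sum fun j _ => ?_
            apply ENNReal.ofReal_le_ofReal
            have hxi : |x i| ≤ 2 * C := by
              have := norm_le_pi_norm x i
              rw [Real.norm_eq_abs] at this
              exact this.trans hx
            have hxj : |x j| ≤ 2 * C := by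
              have := norm_le_pi_norm x j
              rw [Real.norm_eq_abs] at this
              exact this.trans hx
            calc x i * x j * ρ s i j ≤ |x i * x j * ρ s i j| := le_abs_self _
              _ = |x i| * |x j| * |ρ s i j| := by rw [abs_mul, abs_mul]
              _ ≤ (2 * C) * (2 * C) * |ρ s i j| := by
                  have h1 := mul_le_mul hxi hxj (abs_nonneg _) (by linarith)
                  exact mul_le_mul_of_nonneg_right h1 (abs_nonneg _)
    have hptt : ∀ (ρ : ℝ → Matrix (Fin d) (Fin d) ℝ) (s : ℝ),
        Filter.Tendsto (fun n => ENNReal.ofReal (φ n s ⬝ᵥ ρ s *ᵥ φ n s)) Filter.atTop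
          (nhds (ENNReal.ofReal (g s ⬝ᵥ ρ s *ᵥ g s))) := by
      intro ρ s
      exact ((ENNReal.continuous_ofReal.comp (cont_quad (ρ s))).tendsto (g s)).comp
        (hφ_tendsto s)
    have h1 : Filter.Tendsto (fun n => ∫⁻ s, ENNReal.ofReal (φ n s ⬝ᵥ π s *ᵥ φ n s) ∂ν)
        Filter.atTop (nhds (∫⁻ s, ENNReal.ofReal (g s ⬝ᵥ π s *ᵥ g s) ∂ν)) := by
      refine tendsto_lintegral_of_dominated_convergence
        (fun s => ∑ i : Fin d, ∑ j : Fin d, ENNReal.ofReal ((2 * C) * (2 * C) * |π s i j|))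
        (fun n => (meas_quad π hπm _ (φ n).measurable).ennreal_ofReal)
        (fun n => Filter.Eventually.of_forall fun s => hptbd π _ s (hφ_norm n s))
        (bound_fin_aux _ π ν hπm hint) (Filter.Eventually.of_forall fun s => hptt π s)
    have h2 : Filter.Tendsto (fun n => ∫⁻ s, ENNReal.ofReal (φ n s ⬝ᵥ π' s *ᵥ φ n s) ∂ν')
        Filter.atTop (nhds (∫⁻ s, ENNReal.ofReal (g s ⬝ᵥ π' s *ᵥ g s) ∂ν')) := by
      refine tendsto_lintegral_of_dominated_convergence
        (fun s => ∑ i : Fin d, ∑ j : Fin d, ENNReal.ofReal ((2 * C) * (2 * C) * |π' s i j|))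
        (fun n => (meas_quad π' hπ'm _ (φ n).measurable).ennreal_ofReal)
        (fun n => Filter.Eventually.of_forall fun s => hptbd π' _ s (hφ_norm n s))
        (bound_fin_aux _ π' ν' hπ'm hint') (Filter.Eventually.of_forall fun s => hptt π' s)
    exact tendsto_nhds_unique (h1.congr fun n => hsimple (φ n)) h2
  -- Truncation to reduce the general case to the bounded case
  set A : ℕ → Set ℝ := fun N => {s | ‖f s‖ ≤ (N : ℝ)} with hA
  have hAm : ∀ N, MeasurableSet (A N) := fun N =>
    measurableSet_le hf.norm measurable_const
  set fN : ℕ → ℝ → Fin d → ℝ := fun N => (A N).indicator f with hfN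
  have hfNm : ∀ N, Measurable (fN N) := fun N => hf.indicator (hAm N)
  have hfNbd : ∀ N s, ‖fN N s‖ ≤ (N : ℝ) := by
    intro N s
    by_cases h : s ∈ A N
    · simp only [hfN, Set.indicator_of_mem h]
      exact h
    · simp only [hfN, Set.indicator_of_notMem h]
      simp
  have hind : ∀ (ρ : ℝ → Matrix (Fin d) (Fin d) ℝ) (N : ℕ) (s : ℝ),
      ENNReal.ofReal (fN N s ⬝ᵥ ρ s *ᵥ fN N s)
        = (A N).indicator (fun t => ENNReal.ofReal (f t ⬝ᵥ ρ t *ᵥ f t)) s := by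
    intro ρ N s
    by_cases h : s ∈ A N
    · simp only [hfN, Set.indicator_of_mem h]
    · simp only [hfN, Set.indicator_of_notMem h]
      simp
  have hAsub : ∀ {N M : ℕ}, N ≤ M → A N ⊆ A M := by
    intro N M hNM s hs
    simp only [hA, Set.mem_setOf_eq] at hs ⊢
    exact le_trans hs (by exact_mod_cast hNM)
  have hsup : ∀ (ρ : ℝ → Matrix (Fin d) (Fin d) ℝ) (s : ℝ),
      (⨆ N, (A N).indicator (fun t => ENNReal.ofReal (f t ⬝ᵥ ρ t *ᵥ f t)) s)
        = ENNReal.ofReal (f s ⬝ᵥ ρ s *ᵥ f s) := by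
    intro ρ s
    refine le_antisymm (iSup_le fun N => Set.indicator_le_self _ _ s) ?_
    obtain ⟨N, hN⟩ := exists_nat_ge ‖f s‖
    have hN' : s ∈ A N := by
      simp only [hA, Set.mem_setOf_eq]; exact hN
    refine le_iSup_of_le N ?_
    rw [Set.indicator_of_mem hN']
  have hmono : ∀ (ρ : ℝ → Matrix (Fin d) (Fin d) ℝ),
      Monotone (fun N => (A N).indicator
        (fun t => ENNReal.ofReal (f t ⬝ᵥ ρ t *ᵥ f t))) := by
    intro ρ N M hNM s
    exact Set.indicator_le_indicator_of_subset (hAsub hNM) (fun t => zero_le) s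
  have hlim : ∀ (ρ : ℝ → Matrix (Fin d) (Fin d) ℝ)
      (_ : ∀ i j, Measurable fun s => ρ s i j) (m : Measure ℝ),
      ∫⁻ s, ENNReal.ofReal (f s ⬝ᵥ ρ s *ᵥ f s) ∂m
        = ⨆ N, ∫⁻ s, ENNReal.ofReal (fN N s ⬝ᵥ ρ s *ᵥ fN N s) ∂m := by
    intro ρ hρ m
    have hrw : (fun s => ENNReal.ofReal (f s ⬝ᵥ ρ s *ᵥ f s))
        = fun s => ⨆ N, (A N).indicator (fun t => ENNReal.ofReal (f t ⬝ᵥ ρ t *ᵥ f t)) s := by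
      funext s; rw [hsup ρ s]
    rw [hrw, lintegral_iSup (fun N =>
      ((meas_quad ρ hρ f hf).ennreal_ofReal).indicator (hAm N)) (hmono ρ)]
    refine iSup_congr fun N => ?_
    refine lintegral_congr fun s => ?_
    rw [hind ρ N s]
  calc ∫⁻ s in Set.Icc 0 u, ENNReal.ofReal (f s ⬝ᵥ π s *ᵥ f s) ∂μ
      = ⨆ N, ∫⁻ s, ENNReal.ofReal (fN N s ⬝ᵥ π s *ᵥ fN N s) ∂ν := hlim π hπm ν
    _ = ⨆ N, ∫⁻ s, ENNReal.ofReal (fN N s ⬝ᵥ π' s *ᵥ fN N s) ∂ν' :=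
        iSup_congr fun N => hbdd (fN N) (hfNm N) N (hfNbd N)
    _ = ∫⁻ s in Set.Icc 0 u, ENNReal.ofReal (f s ⬝ᵥ π' s *ᵥ f s) ∂μ' := (hlim π' hπ'm ν').symm
end

section
/- Assume ℙ({F² > 0}) > 0 and that there exists ε > 0 with E[|F|^{2+ε}] < ∞. Then V attains its minimum on H: there exists h* ∈ H such that V(h*) ≤ V(h) for all h ∈ H. -/
open MeasureTheory ProbabilityTheory Filter ENNReal
open scoped NNReal

/-- Exponential moments of the centered Gaussian. -/
lemma gauss_exp (v : ℝ≥0) (t : ℝ) :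
    ∫⁻ x, ENNReal.ofReal (Real.exp (t * x)) ∂(gaussianReal 0 v)
      = ENNReal.ofReal (Real.exp (t ^ 2 * v / 2)) := by
  by_cases hv : v = 0
  · simp [hv, gaussianReal_zero_var, lintegral_dirac]
  · rw [gaussianReal_of_var_ne_zero _ hv,
      lintegral_withDensity_eq_lintegral_mul _ (measurable_gaussianPDF _ _)
        (by fun_prop)]
    have hpt : ∀ x : ℝ, (gaussianPDF 0 v * fun x => ENNReal.ofReal (Real.exp (t * x))) x
        = ENNReal.ofReal (Real.exp (t ^ 2 * v / 2)) * gaussianPDF (t * v) v x := by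
      intro x
      simp only [Pi.mul_apply, gaussianPDF, ← ENNReal.ofReal_mul (gaussianPDFReal_nonneg _ _ _),
        ← ENNReal.ofReal_mul (Real.exp_nonneg _)]
      congr 1
      simp only [gaussianPDFReal]
      have hv' : (0:ℝ) < (v : ℝ) := by positivity
      have key : -(x - 0) ^ 2 / (2 * (v:ℝ)) + t * x = t ^ 2 * (v:ℝ) / 2 + -(x - t * (v:ℝ)) ^ 2 / (2 * (v:ℝ)) := by
        field_simp
        ring
      rw [mul_assoc, ← Real.exp_add, key, Real.exp_add]
      ring
    simp_rw [hpt]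
    rw [lintegral_const_mul _ (measurable_gaussianPDF _ _), lintegral_gaussianPDF_eq_one _ hv,
      mul_one]

/-- Chernoff-type bound for a centered Gaussian. -/
lemma gauss_markov (v : ℝ≥0) (t c : ℝ) {S : Set ℝ} (hS : ∀ x ∈ S, c ≤ t * x) :
    (gaussianReal 0 v) S ≤ ENNReal.ofReal (Real.exp (-c + t ^ 2 * v / 2)) := by
  have h1 : (gaussianReal 0 v) S ≤ (gaussianReal 0 v) {x | ENNReal.ofReal (Real.exp c) ≤ ENNReal.ofReal (Real.exp (t * x))} := by
    refine measure_mono fun x hx => ?_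
    exact ENNReal.ofReal_le_ofReal (Real.exp_le_exp.2 (hS x hx))
  refine h1.trans ?_
  have h2 := meas_ge_le_lintegral_div (μ := gaussianReal 0 v)
      (f := fun x => ENNReal.ofReal (Real.exp (t * x))) (by fun_prop)
      (ε := ENNReal.ofReal (Real.exp c)) (by simp [Real.exp_pos]) ENNReal.ofReal_ne_top
  refine h2.trans ?_
  rw [gauss_exp, ← ENNReal.ofReal_div_of_pos (Real.exp_pos _), ← Real.exp_sub]
  exact le_of_eq (by rw [sub_eq_neg_add])


noncomputable def Vfun {Ω : Type*} [MeasurableSpace Ω] (P : Measure Ω)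
    {H : Type*} [NormedAddCommGroup H] [InnerProductSpace ℝ H]
    (F : Ω → ℝ) (G : H →ₗ[ℝ] Lp ℝ 2 P) (h : H) : ℝ≥0∞ :=
  ∫⁻ ω, ENNReal.ofReal ((F ω) ^ 2 * Real.exp (-(G h) ω + ‖h‖ ^ 2 / 2)) ∂P

lemma lintegral_sqrt_mul_sqrt_le {α : Type*} [MeasurableSpace α] (μ : Measure α) {f g : α → ℝ≥0∞}
    (hf : AEMeasurable f μ) (hg : AEMeasurable g μ) :
    ∫⁻ a, (f a) ^ (1/2:ℝ) * (g a) ^ (1/2:ℝ) ∂μ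
      ≤ (∫⁻ a, f a ∂μ) ^ (1/2:ℝ) * (∫⁻ a, g a ∂μ) ^ (1/2:ℝ) := by
  have h2 : (2:ℝ).HolderConjugate 2 := Real.holderConjugate_iff.mpr ⟨one_lt_two, by norm_num⟩
  have key : ∀ x : ℝ≥0∞, (x ^ (1/2:ℝ)) ^ (2:ℝ) = x := fun x => by
    rw [← ENNReal.rpow_mul]; norm_num
  have h := ENNReal.lintegral_mul_le_Lp_mul_Lq μ h2
      (f := fun a => f a ^ (1/2:ℝ)) (g := fun a => g a ^ (1/2:ℝ))
      (hf.pow_const _) (hg.pow_const _)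
  simp only [Pi.mul_apply, key] at h
  exact h

lemma vfun_aemeas {Ω : Type*} [MeasurableSpace Ω] {P : Measure Ω}
    {H : Type*} [NormedAddCommGroup H] [InnerProductSpace ℝ H]
    {F : Ω → ℝ} (hF : Measurable F) (G : H →ₗ[ℝ] Lp ℝ 2 P) (w : H) :
    AEMeasurable (fun ω => ENNReal.ofReal ((F ω) ^ 2 * Real.exp (-(G w) ω + ‖w‖ ^ 2 / 2))) P := by
  have h := (Lp.aestronglyMeasurable (G w)).aemeasurable
  exact ((hF.pow_const 2).aemeasurable.mul
    (Real.measurable_exp.comp_aemeasurable ((h.neg).add_const _))).ennreal_ofReal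

lemma sq_exp_rpow_half (c u : ℝ) : (c ^ 2 * Real.exp u) ^ (1/2:ℝ) = |c| * Real.exp (u / 2) := by
  rw [← sq_abs c, Real.mul_rpow (by positivity) (Real.exp_nonneg _)]
  congr 1
  · rw [← Real.rpow_natCast |c| 2, ← Real.rpow_mul (abs_nonneg _)]
    norm_num
  · rw [Real.rpow_def_of_pos (Real.exp_pos _), Real.log_exp]
    ring_nf

lemma Vfun_midpoint {Ω : Type*} [MeasurableSpace Ω] (P : Measure Ω)
    {H : Type*} [NormedAddCommGroup H] [InnerProductSpace ℝ H]
    (F : Ω → ℝ) (hF : Measurable F) (G : H →ₗ[ℝ] Lp ℝ 2 P) (x y : H) :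
    Vfun P F G ((2:ℝ)⁻¹ • (x + y))
      ≤ ENNReal.ofReal (Real.exp (-‖x - y‖ ^ 2 / 8)) *
        ((Vfun P F G x) ^ (1/2:ℝ) * (Vfun P F G y) ^ (1/2:ℝ)) := by
  set z := (2:ℝ)⁻¹ • (x + y) with hzdef
  have hz : ⇑(G z) =ᵐ[P] fun ω => (2:ℝ)⁻¹ * ((G x) ω + (G y) ω) := by
    have h1 : G z = (2:ℝ)⁻¹ • (G x + G y) := by rw [hzdef, G.map_smul, G.map_add]
    rw [h1]
    filter_upwards [Lp.coeFn_smul ((2:ℝ)⁻¹) (G x + G y), Lp.coeFn_add (G x) (G y)] with ω h2 h3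
    simp only [h2, Pi.smul_apply, smul_eq_mul, h3, Pi.add_apply]
  have hnorm : ‖z‖ ^ 2 / 2 = ‖x‖ ^ 2 / 4 + ‖y‖ ^ 2 / 4 - ‖x - y‖ ^ 2 / 8 := by
    have hpar := parallelogram_law_with_norm ℝ x y
    have hz2 : ‖z‖ = (2:ℝ)⁻¹ * ‖x + y‖ := by
      rw [hzdef, norm_smul]; simp
    rw [hz2]; nlinarith [hpar]
  have key : ∀ ω, (G z) ω = (2:ℝ)⁻¹ * ((G x) ω + (G y) ω) →
      ENNReal.ofReal ((F ω) ^ 2 * Real.exp (-(G z) ω + ‖z‖ ^ 2 / 2))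
        = ENNReal.ofReal (Real.exp (-‖x - y‖ ^ 2 / 8)) *
          ((ENNReal.ofReal ((F ω) ^ 2 * Real.exp (-(G x) ω + ‖x‖ ^ 2 / 2))) ^ (1/2:ℝ) *
           (ENNReal.ofReal ((F ω) ^ 2 * Real.exp (-(G y) ω + ‖y‖ ^ 2 / 2))) ^ (1/2:ℝ)) := by
    intro ω hω
    have hfx : (0:ℝ) ≤ (F ω) ^ 2 * Real.exp (-(G x) ω + ‖x‖ ^ 2 / 2) := by positivity
    have hfy : (0:ℝ) ≤ (F ω) ^ 2 * Real.exp (-(G y) ω + ‖y‖ ^ 2 / 2) := by positivity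
    rw [ENNReal.ofReal_rpow_of_nonneg hfx (by norm_num : (0:ℝ) ≤ 1/2),
        ENNReal.ofReal_rpow_of_nonneg hfy (by norm_num : (0:ℝ) ≤ 1/2),
        ← ENNReal.ofReal_mul (by positivity), ← ENNReal.ofReal_mul (Real.exp_nonneg _)]
    congr 1
    rw [sq_exp_rpow_half, sq_exp_rpow_half]
    have hE : -(G z) ω + ‖z‖ ^ 2 / 2
        = -‖x - y‖ ^ 2 / 8 + ((-(G x) ω + ‖x‖ ^ 2 / 2)/2 + (-(G y) ω + ‖y‖ ^ 2 / 2)/2) := by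
      rw [hω]; rw [hnorm]; ring
    rw [hE, Real.exp_add, Real.exp_add, ← sq_abs (F ω)]
    ring
  calc Vfun P F G z
      = ∫⁻ ω, ENNReal.ofReal (Real.exp (-‖x - y‖ ^ 2 / 8)) *
          ((ENNReal.ofReal ((F ω) ^ 2 * Real.exp (-(G x) ω + ‖x‖ ^ 2 / 2))) ^ (1/2:ℝ) *
           (ENNReal.ofReal ((F ω) ^ 2 * Real.exp (-(G y) ω + ‖y‖ ^ 2 / 2))) ^ (1/2:ℝ)) ∂P := by
        refine lintegral_congr_ae ?_
        filter_upwards [hz] with ω hω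
        exact key ω hω
    _ = ENNReal.ofReal (Real.exp (-‖x - y‖ ^ 2 / 8)) *
          ∫⁻ ω, ((ENNReal.ofReal ((F ω) ^ 2 * Real.exp (-(G x) ω + ‖x‖ ^ 2 / 2))) ^ (1/2:ℝ) *
           (ENNReal.ofReal ((F ω) ^ 2 * Real.exp (-(G y) ω + ‖y‖ ^ 2 / 2))) ^ (1/2:ℝ)) ∂P := by
        rw [lintegral_const_mul' _ _ ENNReal.ofReal_ne_top]
    _ ≤ _ := by
        refine mul_le_mul_right ?_ _
        exact lintegral_sqrt_mul_sqrt_le P (vfun_aemeas hF G x) (vfun_aemeas hF G y)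

section
variable {Ω : Type*} [MeasurableSpace Ω] {P : Measure Ω} [IsProbabilityMeasure P]
    {H : Type*} [NormedAddCommGroup H] [InnerProductSpace ℝ H]
    {F : Ω → ℝ} (G : H →ₗ[ℝ] Lp ℝ 2 P)

/-- The uniform positive lower bound for `Vfun`. -/
lemma Vfun_lower (hF : Measurable F) (hG : ∀ h : H, P.map (G h) = gaussianReal 0 (‖h‖₊ ^ 2))
    (hFpos : 0 < P {ω | 0 < (F ω) ^ 2}) :
    ∃ c : ℝ≥0∞, 0 < c ∧ c ≠ ⊤ ∧ ∀ h : H, c ≤ Vfun P F G h := by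
  -- find δ with positive measure
  have hunion : {ω | 0 < (F ω) ^ 2} = ⋃ n : ℕ, {ω | 1 / (n + 1 : ℝ) ≤ (F ω) ^ 2} := by
    ext ω
    simp only [Set.mem_setOf_eq, Set.mem_iUnion]
    constructor
    · intro h0
      obtain ⟨n, hn⟩ := exists_nat_one_div_lt h0
      exact ⟨n, hn.le⟩
    · rintro ⟨n, hn⟩
      exact lt_of_lt_of_le (by positivity) hn
  obtain ⟨n, hn⟩ : ∃ n : ℕ, 0 < P {ω | 1 / (n + 1 : ℝ) ≤ (F ω) ^ 2} := by
    by_contra hcon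
    push_neg at hcon
    have : ∀ n : ℕ, P {ω | 1 / (n + 1 : ℝ) ≤ (F ω) ^ 2} = 0 :=
      fun n => le_antisymm (hcon n) (zero_le)
    rw [hunion] at hFpos
    exact absurd (measure_iUnion_null this) (by exact ne_of_gt hFpos)
  set δ : ℝ := 1 / (n + 1 : ℝ) with hδdef
  have hδ : 0 < δ := by positivity
  set S : Set Ω := {ω | δ ≤ (F ω) ^ 2} with hSdef
  have hSmeas : MeasurableSet S := measurableSet_le measurable_const (hF.pow_const 2)
  set α : ℝ≥0∞ := P S with hαdef
  have hα0 : α ≠ 0 := ne_of_gt hn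
  have hαtop : α ≠ ⊤ := measure_ne_top _ _
  have hα2 : α / 2 ≠ 0 := by simp [ENNReal.div_eq_zero_iff, hα0]
  have hα2top : α / 2 ≠ ⊤ := by simp [ENNReal.div_eq_top, hαtop]
  set r : ℝ := (α / 2).toReal with hrdef
  have hr : 0 < r := ENNReal.toReal_pos hα2 hα2top
  have hofr : ENNReal.ofReal r = α / 2 := ENNReal.ofReal_toReal hα2top
  set s₀ : ℝ := max 1 (Real.sqrt (max 0 (2 * Real.log r⁻¹))) with hs₀def
  have hs₀1 : (1:ℝ) ≤ s₀ := le_max_left _ _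
  have hs₀ : 0 < s₀ := lt_of_lt_of_le one_pos hs₀1
  have hexp : Real.exp (-s₀ ^ 2 / 2) ≤ r := by
    have h1 : 2 * Real.log r⁻¹ ≤ s₀ ^ 2 := by
      have h2 : Real.sqrt (max 0 (2 * Real.log r⁻¹)) ≤ s₀ := le_max_right _ _
      have h3 : Real.sqrt (max 0 (2 * Real.log r⁻¹)) ^ 2 = max 0 (2 * Real.log r⁻¹) :=
        Real.sq_sqrt (le_max_left _ _)
      nlinarith [Real.sqrt_nonneg (max 0 (2 * Real.log r⁻¹)), le_max_right 0 (2 * Real.log r⁻¹)]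
    have h4 : -s₀ ^ 2 / 2 ≤ Real.log r := by
      rw [Real.log_inv] at h1; linarith
    calc Real.exp (-s₀ ^ 2 / 2) ≤ Real.exp (Real.log r) := Real.exp_le_exp.2 h4
      _ = r := Real.exp_log hr
  refine ⟨ENNReal.ofReal (δ * Real.exp (-s₀ ^ 2 / 2)) * (α / 2), ?_, ?_, ?_⟩
  · apply ENNReal.mul_pos
    · simp only [ne_eq, ENNReal.ofReal_eq_zero, not_le]
      positivity
    · exact hα2
  · exact ENNReal.mul_ne_top ENNReal.ofReal_ne_top hα2top
  intro h
  set A := Lp.aestronglyMeasurable (G h) with hAdef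
  set g' : Ω → ℝ := A.mk with hg'def
  have hg'meas : Measurable g' := A.stronglyMeasurable_mk.measurable
  have hae : ⇑(G h) =ᵐ[P] g' := A.ae_eq_mk
  have hmap : P.map g' = gaussianReal 0 (‖h‖₊ ^ 2) := by
    rw [← Measure.map_congr hae]; exact hG h
  -- tail bound
  have htail : P {ω | s₀ * ‖h‖ < g' ω} ≤ α / 2 := by
    have happ : P {ω | s₀ * ‖h‖ < g' ω} = (P.map g') (Set.Ioi (s₀ * ‖h‖)) := by
      rw [Measure.map_apply hg'meas measurableSet_Ioi]
      rfl
    rw [happ, hmap]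
    by_cases hh : h = 0
    · subst hh
      simp only [norm_zero, nnnorm_zero, mul_zero]
      rw [show ((0:ℝ≥0) ^ 2) = 0 by simp, gaussianReal_zero_var]
      rw [Measure.dirac_apply' _ measurableSet_Ioi]
      simp [Set.indicator, hα2, Set.mem_Ioi]
    · have hnorm : 0 < ‖h‖ := norm_pos_iff.2 hh
      have hb := gauss_markov (‖h‖₊ ^ 2) (s₀ / ‖h‖) (s₀ ^ 2) (S := Set.Ioi (s₀ * ‖h‖)) ?_
      · refine hb.trans ?_
        rw [← hofr]
        apply ENNReal.ofReal_le_ofReal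
        have hcast : ((‖h‖₊ ^ 2 : ℝ≥0) : ℝ) = ‖h‖ ^ 2 := by
          push_cast [coe_nnnorm]; ring
        rw [hcast]
        have hev : -s₀ ^ 2 + (s₀ / ‖h‖) ^ 2 * ‖h‖ ^ 2 / 2 = -s₀ ^ 2 / 2 := by
          field_simp
          ring
        rw [hev]
        exact hexp
      · intro x hx
        simp only [Set.mem_Ioi] at hx
        rw [div_mul_eq_mul_div, le_div_iff₀ hnorm]
        nlinarith
  -- main bound
  set T : Set Ω := S ∩ {ω | g' ω ≤ s₀ * ‖h‖} with hTdef
  have hTmeas : MeasurableSet T :=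
    hSmeas.inter (measurableSet_le hg'meas measurable_const)
  have hST : S ⊆ T ∪ {ω | s₀ * ‖h‖ < g' ω} := by
    intro ω hω
    rcases le_or_gt (g' ω) (s₀ * ‖h‖) with hc | hc
    · exact Or.inl ⟨hω, hc⟩
    · exact Or.inr hc
  have hPT : α / 2 ≤ P T := by
    have h1 : α ≤ P T + P {ω | s₀ * ‖h‖ < g' ω} :=
      (measure_mono hST).trans (measure_union_le _ _)
    have h2 : α / 2 + α / 2 ≤ P T + α / 2 := by
      rw [ENNReal.add_halves]
      exact h1.trans (add_le_add_right htail _)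
    exact (ENNReal.add_le_add_iff_right hα2top).1 h2
  have hVeq : Vfun P F G h = ∫⁻ ω, ENNReal.ofReal ((F ω) ^ 2 * Real.exp (-g' ω + ‖h‖ ^ 2 / 2)) ∂P := by
    refine lintegral_congr_ae ?_
    filter_upwards [hae] with ω hω
    rw [hω]
  rw [hVeq]
  calc ENNReal.ofReal (δ * Real.exp (-s₀ ^ 2 / 2)) * (α / 2)
      ≤ ENNReal.ofReal (δ * Real.exp (-s₀ ^ 2 / 2)) * P T := mul_le_mul_right hPT _
    _ = ∫⁻ _ω in T, ENNReal.ofReal (δ * Real.exp (-s₀ ^ 2 / 2)) ∂P := by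
        rw [setLIntegral_const]
    _ ≤ ∫⁻ ω in T, ENNReal.ofReal ((F ω) ^ 2 * Real.exp (-g' ω + ‖h‖ ^ 2 / 2)) ∂P := by
        refine setLIntegral_mono' hTmeas ?_
        intro ω hω
        obtain ⟨hω1, hω2⟩ := hω
        apply ENNReal.ofReal_le_ofReal
        have hg2 : g' ω ≤ s₀ * ‖h‖ := hω2
        have hexp2 : Real.exp (-s₀ ^ 2 / 2) ≤ Real.exp (-g' ω + ‖h‖ ^ 2 / 2) := by
          apply Real.exp_le_exp.2
          nlinarith [sq_nonneg (‖h‖ - s₀)]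
        have hδF : δ ≤ (F ω) ^ 2 := hω1
        nlinarith [Real.exp_nonneg (-s₀ ^ 2 / 2), Real.exp_nonneg (-g' ω + ‖h‖ ^ 2 / 2), hδ.le]
    _ ≤ _ := setLIntegral_le_lintegral _ _
end

section
variable {Ω : Type*} [MeasurableSpace Ω] {P : Measure Ω} [IsProbabilityMeasure P]
    {H : Type*} [NormedAddCommGroup H] [InnerProductSpace ℝ H]
    {F : Ω → ℝ} (G : H →ₗ[ℝ] Lp ℝ 2 P)

/-- `V 0 < ∞` given the `2+ε` moment. -/
lemma Vfun_zero_lt_top {ε : ℝ} (hε : 0 < ε)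
    (hmom : ∫⁻ ω, ENNReal.ofReal (|F ω| ^ (2 + ε)) ∂P < ⊤) :
    Vfun P F G 0 < ⊤ := by
  have h0 : Vfun P F G 0 = ∫⁻ ω, ENNReal.ofReal ((F ω) ^ 2) ∂P := by
    refine lintegral_congr_ae ?_
    have hz : ⇑(G 0) =ᵐ[P] 0 := by
      have : G 0 = 0 := map_zero G
      rw [this]; exact Lp.coeFn_zero ℝ 2 P
    filter_upwards [hz] with ω hω
    rw [hω]
    norm_num
  rw [h0]
  have hbound : ∀ ω, ENNReal.ofReal ((F ω) ^ 2)
      ≤ 1 + ENNReal.ofReal (|F ω| ^ (2 + ε)) := by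
    intro ω
    rcases le_total (|F ω|) 1 with h1 | h1
    · refine le_trans ?_ le_self_add
      rw [← ENNReal.ofReal_one]
      apply ENNReal.ofReal_le_ofReal
      rw [← sq_abs]
      nlinarith [abs_nonneg (F ω)]
    · refine le_trans ?_ le_add_self
      apply ENNReal.ofReal_le_ofReal
      rw [← sq_abs, ← Real.rpow_natCast (|F ω|) 2]
      refine Real.rpow_le_rpow_of_exponent_le h1 ?_
      push_cast
      linarith
  calc ∫⁻ ω, ENNReal.ofReal ((F ω) ^ 2) ∂P
      ≤ ∫⁻ ω, (1 + ENNReal.ofReal (|F ω| ^ (2 + ε))) ∂P := lintegral_mono hbound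
    _ = ∫⁻ _ω, (1:ℝ≥0∞) ∂P + ∫⁻ ω, ENNReal.ofReal (|F ω| ^ (2 + ε)) ∂P :=
        lintegral_add_left measurable_const _
    _ < ⊤ := by
        rw [lintegral_one, measure_univ]
        exact ENNReal.add_lt_top.2 ⟨one_lt_top, hmom⟩

/-- convergence in `H` gives convergence in measure of the Gaussian fields. -/
lemma tendstoInMeasure_G (hG : ∀ h : H, P.map (G h) = gaussianReal 0 (‖h‖₊ ^ 2))
    {u : ℕ → H} {hstar : H} (hu : Filter.Tendsto u atTop (nhds hstar)) :
    TendstoInMeasure P (fun n => ⇑(G (u n))) atTop ⇑(G hstar) := by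
  rw [tendstoInMeasure_iff_dist]
  intro η hη
  rw [ENNReal.tendsto_nhds_zero]
  intro ε' hε'
  -- pick a real threshold below ε'
  obtain ⟨ρ, hρ0, hρ⟩ : ∃ ρ : ℝ, 0 < ρ ∧ ENNReal.ofReal ρ ≤ ε' := by
    rcases eq_or_ne ε' ⊤ with h | h
    · exact ⟨1, one_pos, by simp [h]⟩
    · refine ⟨ε'.toReal, ENNReal.toReal_pos (ne_of_gt hε') h, ?_⟩
      rw [ENNReal.ofReal_toReal h]
  -- choose w > 0 such that 2 * exp (-η²/(2v)) ≤ ρ whenever 0 < v ≤ w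
  set K : ℝ := max 1 (Real.log (2 / ρ)) with hKdef
  have hK : 0 < K := lt_of_lt_of_le one_pos (le_max_left _ _)
  set w : ℝ := η ^ 2 / (2 * K) with hwdef
  have hw : 0 < w := by positivity
  have hbnd : ∀ v : ℝ, 0 < v → v ≤ w → 2 * Real.exp (-η ^ 2 / (2 * v)) ≤ ρ := by
    intro v hv hvw
    have h1 : K ≤ η ^ 2 / (2 * v) := by
      rw [le_div_iff₀ (by positivity)]
      have hwq : w * (2 * K) = η ^ 2 := by rw [hwdef]; field_simp
      nlinarith
    have h2 : Real.exp (-η ^ 2 / (2 * v)) ≤ ρ / 2 := by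
      have h3 : -η ^ 2 / (2 * v) ≤ -Real.log (2 / ρ) := by
        have h5 : Real.log (2 / ρ) ≤ K := le_max_right _ _
        have h6 : -η ^ 2 / (2 * v) = -(η ^ 2 / (2 * v)) := by ring
        rw [h6]
        linarith
      calc Real.exp (-η ^ 2 / (2 * v)) ≤ Real.exp (-Real.log (2 / ρ)) := Real.exp_le_exp.2 h3
        _ = ρ / 2 := by
            rw [Real.exp_neg, Real.exp_log (by positivity)]
            rw [inv_div]
    linarith
  -- eventually the variance is small
  obtain ⟨N, hN⟩ := Metric.tendsto_atTop.1 hu (Real.sqrt w) (Real.sqrt_pos.2 hw)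
  rw [Filter.eventually_atTop]
  refine ⟨N, fun n hn => ?_⟩
  set d : H := u n - hstar with hddef
  have hdw : ‖d‖ ^ 2 ≤ w := by
    have h5 := hN n hn
    rw [dist_eq_norm] at h5
    have h6 : ‖d‖ < Real.sqrt w := h5
    nlinarith [Real.sq_sqrt hw.le, norm_nonneg d, Real.sqrt_nonneg w]
  -- identify the difference with G d
  have hsub : (fun x => dist ((G (u n)) x) ((G hstar) x)) =ᵐ[P] fun x => |(G d) x| := by
    have h7 : G d = G (u n) - G hstar := by rw [hddef, map_sub]
    filter_upwards [Lp.coeFn_sub (G (u n)) (G hstar)] with x hx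
    rw [dist_eq_norm, h7, hx]
    simp [Real.norm_eq_abs]
  have hset : P {x | η ≤ dist ((G (u n)) x) ((G hstar) x)} = P {x | η ≤ |(G d) x|} := by
    apply measure_congr
    rw [Filter.eventuallyEq_set]
    filter_upwards [hsub] with x hx
    show η ≤ dist ((G (u n)) x) ((G hstar) x) ↔ η ≤ |(G d) x|
    rw [hx]
  rw [hset]
  -- push to the Gaussian law
  have hBmeas : MeasurableSet {x : ℝ | η ≤ |x|} :=
    measurableSet_le measurable_const measurable_abs
  have hmap : P {x | η ≤ |(G d) x|} = (gaussianReal 0 (‖d‖₊ ^ 2)) {x : ℝ | η ≤ |x|} := by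
    rw [← hG d, Measure.map_apply_of_aemeasurable (Lp.aestronglyMeasurable (G d)).aemeasurable hBmeas]
    rfl
  rw [hmap]
  by_cases hd0 : d = 0
  · rw [hd0]
    simp only [nnnorm_zero]
    rw [show ((0:ℝ≥0) ^ 2) = 0 by simp, gaussianReal_zero_var]
    rw [Measure.dirac_apply' _ hBmeas]
    have : (0:ℝ) ∉ {x : ℝ | η ≤ |x|} := by
      simp only [Set.mem_setOf_eq, abs_zero, not_le]; exact hη
    rw [Set.indicator_of_notMem this]
    exact zero_le
  · have hdn : 0 < ‖d‖ := norm_pos_iff.2 hd0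
    set v' : ℝ := ‖d‖ ^ 2 with hv'def
    have hv' : 0 < v' := by positivity
    have hcast : ((‖d‖₊ ^ 2 : ℝ≥0) : ℝ) = v' := by
      push_cast [coe_nnnorm]; ring
    have hsplit : {x : ℝ | η ≤ |x|} ⊆ {x : ℝ | η ≤ x} ∪ {x : ℝ | x ≤ -η} := by
      intro x hx
      simp only [Set.mem_setOf_eq, abs_le'] at hx ⊢
      rcases abs_choice x with h | h
      · left; simp only [Set.mem_setOf_eq]; rw [h] at hx; exact hx
      · right; simp only [Set.mem_setOf_eq]; rw [h] at hx; linarith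
    have h1 : (gaussianReal 0 (‖d‖₊ ^ 2)) {x : ℝ | η ≤ x}
        ≤ ENNReal.ofReal (Real.exp (-η ^ 2 / (2 * v'))) := by
      have := gauss_markov (‖d‖₊ ^ 2) (η / v') (η ^ 2 / v')
        (S := {x : ℝ | η ≤ x}) ?_
      · refine this.trans (le_of_eq ?_)
        congr 1
        rw [hcast]
        field_simp
        ring
      · intro x hx
        simp only [Set.mem_setOf_eq] at hx
        rw [div_mul_eq_mul_div, div_le_div_iff₀ hv' hv']
        nlinarith [mul_le_mul_of_nonneg_left hx hη.le, hv'.le]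
    have h2 : (gaussianReal 0 (‖d‖₊ ^ 2)) {x : ℝ | x ≤ -η}
        ≤ ENNReal.ofReal (Real.exp (-η ^ 2 / (2 * v'))) := by
      have := gauss_markov (‖d‖₊ ^ 2) (-η / v') (η ^ 2 / v')
        (S := {x : ℝ | x ≤ -η}) ?_
      · refine this.trans (le_of_eq ?_)
        congr 1
        rw [hcast]
        field_simp
        ring
      · intro x hx
        simp only [Set.mem_setOf_eq] at hx
        rw [div_mul_eq_mul_div, div_le_div_iff₀ hv' hv']
        have h7 : η ≤ -x := by linarith
        nlinarith [mul_le_mul_of_nonneg_left h7 hη.le, hv'.le]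
    calc (gaussianReal 0 (‖d‖₊ ^ 2)) {x : ℝ | η ≤ |x|}
        ≤ (gaussianReal 0 (‖d‖₊ ^ 2)) ({x : ℝ | η ≤ x} ∪ {x : ℝ | x ≤ -η}) :=
          measure_mono hsplit
      _ ≤ (gaussianReal 0 (‖d‖₊ ^ 2)) {x : ℝ | η ≤ x}
            + (gaussianReal 0 (‖d‖₊ ^ 2)) {x : ℝ | x ≤ -η} := measure_union_le _ _
      _ ≤ ENNReal.ofReal (Real.exp (-η ^ 2 / (2 * v')))
            + ENNReal.ofReal (Real.exp (-η ^ 2 / (2 * v'))) := add_le_add h1 h2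
      _ = ENNReal.ofReal (2 * Real.exp (-η ^ 2 / (2 * v'))) := by
          rw [← ENNReal.ofReal_add (Real.exp_nonneg _) (Real.exp_nonneg _)]
          congr 1; ring
      _ ≤ ENNReal.ofReal ρ := ENNReal.ofReal_le_ofReal (hbnd v' hv' hdw)
      _ ≤ ε' := hρ
end

/-- Existence of a minimizer of `V` on `H`. -/
theorem stmt_16 {Ω : Type*} [MeasurableSpace Ω] (P : Measure Ω) [IsProbabilityMeasure P]
    {H : Type*} [NormedAddCommGroup H] [InnerProductSpace ℝ H] [CompleteSpace H]
    [TopologicalSpace.SeparableSpace H]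
    (F : Ω → ℝ) (hF : Measurable F)
    (G : H →ₗ[ℝ] Lp ℝ 2 P)
    (hG : ∀ h : H, P.map (G h) = gaussianReal 0 (‖h‖₊ ^ 2))
    (hFpos : 0 < P {ω | 0 < (F ω) ^ 2})
    (ε : ℝ) (hε : 0 < ε)
    (hmom : ∫⁻ ω, ENNReal.ofReal (|F ω| ^ (2 + ε)) ∂P < ⊤) :
    ∃ hstar : H, ∀ h : H, Vfun P F G hstar ≤ Vfun P F G h := by
  classical
  set m : ℝ≥0∞ := ⨅ h : H, Vfun P F G h with hmdef
  obtain ⟨c₀, hc₀pos, hc₀top, hc₀⟩ := Vfun_lower G hF hG hFpos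
  have hmlb : c₀ ≤ m := le_iInf hc₀
  have hm0 : m ≠ 0 := fun hm => by
    rw [hm] at hmlb
    exact absurd (le_antisymm hmlb (zero_le)) (ne_of_gt hc₀pos)
  have hmtop : m ≠ ⊤ :=
    ne_top_of_le_ne_top (Vfun_zero_lt_top G hε hmom).ne (iInf_le _ 0)
  set M : ℝ := m.toReal with hMdef
  have hM : 0 < M := ENNReal.toReal_pos hm0 hmtop
  -- minimizing sequence
  have hseq : ∀ n : ℕ, ∃ h : H, Vfun P F G h < m + ENNReal.ofReal (1 / (n + 1 : ℝ)) := by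
    intro n
    rw [← iInf_lt_iff (f := fun h : H => Vfun P F G h)]
    exact ENNReal.lt_add_right hmtop (by simp; positivity)
  choose u hu using hseq
  -- midpoint estimate
  have key : ∀ n k : ℕ, m ≤ ENNReal.ofReal (Real.exp (-dist (u n) (u k) ^ 2 / 8)) *
      ((Vfun P F G (u n)) ^ (1/2:ℝ) * (Vfun P F G (u k)) ^ (1/2:ℝ)) := by
    intro n k
    calc m ≤ Vfun P F G ((2:ℝ)⁻¹ • (u n + u k)) := iInf_le _ _
      _ ≤ _ := by
          rw [dist_eq_norm]
          exact Vfun_midpoint P F hF G (u n) (u k)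
  -- Cauchy sequence
  have hcauchy : CauchySeq u := by
    rw [Metric.cauchySeq_iff]
    intro δ hδ
    set K : ℝ := δ ^ 2 / 8 with hKdef
    have hK : 0 < K := by positivity
    have hK1 : 1 < Real.exp K := by
      rw [show (1:ℝ) = Real.exp 0 by simp]
      exact Real.exp_lt_exp.2 hK
    set e' : ℝ := M * (Real.exp K - 1) / 2 with he'def
    have he'pos : 0 < e' := by
      have h6 : 0 < Real.exp K - 1 := by linarith
      rw [he'def]
      positivity
    obtain ⟨N, hN⟩ := exists_nat_one_div_lt he'pos
    refine ⟨N, fun n hn k hk => ?_⟩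
    by_contra hcon
    push_neg at hcon
    -- bounds on the values
    have hVb : ∀ j : ℕ, N ≤ j → Vfun P F G (u j) ≤ m + ENNReal.ofReal e' := by
      intro j hj
      refine (hu j).le.trans (add_le_add_right (ENNReal.ofReal_le_ofReal ?_) m)
      have h1 : (1:ℝ) / (j + 1) ≤ 1 / (N + 1) := by
        apply one_div_le_one_div_of_le (by positivity)
        push_cast
        exact_mod_cast add_le_add_left (Nat.cast_le.2 hj) 1
      linarith
    set B : ℝ≥0∞ := m + ENNReal.ofReal e' with hBdef
    have hB0 : B ≠ 0 := by
      intro hB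
      rw [hBdef] at hB
      exact hm0 (by simpa using (add_eq_zero.1 hB).1)
    have hBtop : B ≠ ⊤ := ENNReal.add_ne_top.2 ⟨hmtop, ENNReal.ofReal_ne_top⟩
    have hprod : (Vfun P F G (u n)) ^ (1/2:ℝ) * (Vfun P F G (u k)) ^ (1/2:ℝ) ≤ B := by
      calc (Vfun P F G (u n)) ^ (1/2:ℝ) * (Vfun P F G (u k)) ^ (1/2:ℝ)
          ≤ B ^ (1/2:ℝ) * B ^ (1/2:ℝ) :=
            mul_le_mul' (ENNReal.rpow_le_rpow (hVb n hn) (by norm_num))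
              (ENNReal.rpow_le_rpow (hVb k hk) (by norm_num))
        _ = B := by
            rw [← ENNReal.rpow_add _ _ hB0 hBtop]
            norm_num
    have hmain : m ≤ ENNReal.ofReal (Real.exp (-K)) * B := by
      refine (key n k).trans (mul_le_mul' (ENNReal.ofReal_le_ofReal ?_) hprod)
      apply Real.exp_le_exp.2
      rw [hKdef]
      nlinarith [dist_nonneg (x := u n) (y := u k), hδ.le, hcon]
    -- contradiction
    have hreal : M ≤ Real.exp (-K) * (M + e') := by
      have h2 : (ENNReal.ofReal (Real.exp (-K)) * B).toReal
          = Real.exp (-K) * (M + e') := by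
        rw [ENNReal.toReal_mul, ENNReal.toReal_ofReal (Real.exp_nonneg _), hBdef,
          ENNReal.toReal_add hmtop ENNReal.ofReal_ne_top,
          ENNReal.toReal_ofReal he'pos.le]
      calc M = m.toReal := rfl
        _ ≤ (ENNReal.ofReal (Real.exp (-K)) * B).toReal :=
            ENNReal.toReal_mono (ENNReal.mul_ne_top ENNReal.ofReal_ne_top hBtop) hmain
        _ = _ := h2
    have hee : Real.exp (-K) * Real.exp K = 1 := by
      rw [← Real.exp_add]; simp
    nlinarith [hreal, hee, hK1, hM, he'pos, Real.exp_pos (-K),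
      mul_le_mul_of_nonneg_right hreal (Real.exp_pos K).le]
  -- the limit point
  obtain ⟨hstar, hlim⟩ := cauchySeq_tendsto_of_complete hcauchy
  refine ⟨hstar, fun h => ?_⟩
  have hVstar : Vfun P F G hstar ≤ m := by
    obtain ⟨ns, hns_mono, hae⟩ := (tendstoInMeasure_G G hG hlim).exists_seq_tendsto_ae
    have hsub_tendsto : Filter.Tendsto (fun k => u (ns k)) atTop (nhds hstar) :=
      hlim.comp hns_mono.tendsto_atTop
    have hconv : ∀ᵐ ω ∂P, Filter.Tendsto
        (fun k => ENNReal.ofReal ((F ω) ^ 2 *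
          Real.exp (-(G (u (ns k))) ω + ‖u (ns k)‖ ^ 2 / 2))) atTop
        (nhds (ENNReal.ofReal ((F ω) ^ 2 *
          Real.exp (-(G hstar) ω + ‖hstar‖ ^ 2 / 2)))) := by
      filter_upwards [hae] with ω hω
      refine ENNReal.tendsto_ofReal ?_
      refine Filter.Tendsto.mul tendsto_const_nhds ?_
      refine (Real.continuous_exp.tendsto _).comp ?_
      refine Filter.Tendsto.add hω.neg ?_
      have hnorms : Filter.Tendsto (fun k => ‖u (ns k)‖) atTop (nhds ‖hstar‖) :=
        (continuous_norm.tendsto _).comp hsub_tendsto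
      have := ((hnorms.pow 2).div_const 2)
      exact this
    have h1 : Vfun P F G hstar ≤ liminf (fun k => Vfun P F G (u (ns k))) atTop := by
      have heq : Vfun P F G hstar = ∫⁻ ω, liminf
          (fun k => ENNReal.ofReal ((F ω) ^ 2 *
            Real.exp (-(G (u (ns k))) ω + ‖u (ns k)‖ ^ 2 / 2))) atTop ∂P := by
        refine lintegral_congr_ae ?_
        filter_upwards [hconv] with ω hω
        exact hω.liminf_eq.symm
      rw [Vfun] at heq ⊢
      rw [heq]
      exact lintegral_liminf_le' (fun k => vfun_aemeas hF G (u (ns k)))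
    refine h1.trans ?_
    have h2 : ∀ k : ℕ, Vfun P F G (u (ns k)) ≤ m + ENNReal.ofReal (1 / (k + 1 : ℝ)) := by
      intro k
      refine (hu (ns k)).le.trans (add_le_add_right (ENNReal.ofReal_le_ofReal ?_) m)
      apply one_div_le_one_div_of_le (by positivity)
      have hk' : k ≤ ns k := hns_mono.le_apply
      push_cast
      exact_mod_cast add_le_add_left (Nat.cast_le.2 hk') 1
    have h3 : liminf (fun k => Vfun P F G (u (ns k))) atTop
        ≤ liminf (fun k : ℕ => m + ENNReal.ofReal (1 / (k + 1 : ℝ))) atTop :=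
      liminf_le_liminf (Filter.Eventually.of_forall h2)
    refine h3.trans ?_
    have h4 : Filter.Tendsto (fun k : ℕ => m + ENNReal.ofReal (1 / (k + 1 : ℝ))) atTop
        (nhds (m + 0)) := by
      refine Filter.Tendsto.const_add m ?_
      rw [show (0:ℝ≥0∞) = ENNReal.ofReal 0 by simp]
      exact ENNReal.tendsto_ofReal tendsto_one_div_add_atTop_nhds_zero_nat
    rw [add_zero] at h4
    exact le_of_eq h4.liminf_eq
  exact hVstar.trans (iInf_le _ h)
end

section
/- Assume ℙ({F² > 0}) > 0 and that there exists ε > 0 with E[|F|^{2+ε}] < ∞, and let D ⊆ H be a dense subset. Then there exists a sequence (h_n) in D such that V(h_n) → min_{h ∈ H} V(h); in particular, the optimal sampling drift can be approximated arbitrarily well by elements of D (e.g. by drifts generated by feedforward neural networks). -/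
open MeasureTheory ProbabilityTheory Filter ENNReal NNReal Real Topology


lemma gauss_key (v : ℝ≥0) (x : ℝ) :
    gaussianPDFReal 0 v x * rexp (-x) = rexp (v / 2) * gaussianPDFReal (-(v:ℝ)) v x := by
  rcases eq_or_ne v 0 with hv | hv
  · simp [hv]
  have hv' : (v:ℝ) ≠ 0 := by exact_mod_cast hv
  simp only [gaussianPDFReal]
  conv_lhs => rw [mul_assoc, ← Real.exp_add]
  conv_rhs => rw [mul_comm (rexp ((v:ℝ)/2)) _, mul_assoc, ← Real.exp_add]
  congr 1
  field_simp
  ring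

lemma integrable_exp_neg_gaussianReal (v : ℝ≥0) :
    Integrable (fun x => rexp (-x)) (gaussianReal 0 v) := by
  rcases eq_or_ne v 0 with hv | hv
  · rw [hv, gaussianReal_zero_var]
    refine ⟨(Real.continuous_exp.comp continuous_neg).aestronglyMeasurable, ?_⟩
    simp [HasFiniteIntegral, lintegral_dirac]
  rw [gaussianReal_of_var_ne_zero _ hv]
  have hmeas : Measurable fun x => (gaussianPDFReal 0 v x).toNNReal :=
    (measurable_gaussianPDFReal 0 v).real_toNNReal
  rw [show (gaussianPDF 0 v) = fun x => ((gaussianPDFReal 0 v x).toNNReal : ℝ≥0∞) from rfl]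
  rw [integrable_withDensity_iff_integrable_smul hmeas]
  have : (fun x => ((gaussianPDFReal 0 v x).toNNReal : ℝ≥0) • rexp (-x))
      = fun x => rexp ((v:ℝ) / 2) * gaussianPDFReal (-(v:ℝ)) v x := by
    ext x
    rw [NNReal.smul_def, smul_eq_mul, Real.coe_toNNReal _ (gaussianPDFReal_nonneg 0 v x),
      gauss_key]
  rw [this]
  exact (integrable_gaussianPDFReal _ _).const_mul _

lemma integral_exp_neg_gaussianReal (v : ℝ≥0) :
    ∫ x, rexp (-x) ∂(gaussianReal 0 v) = rexp (v / 2) := by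
  rcases eq_or_ne v 0 with hv | hv
  · rw [hv, gaussianReal_zero_var, integral_dirac]
    simp
  rw [gaussianReal_of_var_ne_zero _ hv]
  have hmeas : Measurable fun x => (gaussianPDFReal 0 v x).toNNReal :=
    (measurable_gaussianPDFReal 0 v).real_toNNReal
  rw [show (gaussianPDF 0 v) = fun x => ((gaussianPDFReal 0 v x).toNNReal : ℝ≥0∞) from rfl]
  rw [integral_withDensity_eq_integral_smul hmeas]
  have : (fun x => ((gaussianPDFReal 0 v x).toNNReal : ℝ≥0) • rexp (-x))
      = fun x => rexp ((v:ℝ) / 2) * gaussianPDFReal (-(v:ℝ)) v x := by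
    ext x
    rw [NNReal.smul_def, smul_eq_mul, Real.coe_toNNReal _ (gaussianPDFReal_nonneg 0 v x),
      gauss_key]
  rw [this, integral_const_mul, integral_gaussianPDFReal_eq_one _ hv, mul_one]

set_option linter.unusedSectionVars false

section GLemmas

variable {Ω : Type*} [MeasurableSpace Ω] {P : Measure Ω} [IsProbabilityMeasure P]
  {H : Type*} [NormedAddCommGroup H] [InnerProductSpace ℝ H]
  {G : H →ₗ[ℝ] Lp ℝ 2 P}

lemma exp_neg_G_integrable (hG : ∀ h : H, P.map (G h) = gaussianReal 0 (‖h‖₊ ^ 2)) (u : H) :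
    Integrable (fun ω => rexp (-(G u) ω)) P := by
  have hae : AEMeasurable (⇑(G u)) P := (Lp.aestronglyMeasurable (G u)).aemeasurable
  have hsm : AEStronglyMeasurable (fun x : ℝ => rexp (-x)) (P.map (G u)) :=
    (Real.continuous_exp.comp continuous_neg).aestronglyMeasurable
  have := (integrable_map_measure hsm hae).mp
    (by rw [hG u]; exact integrable_exp_neg_gaussianReal _)
  exact this

lemma exp_neg_G_integral (hG : ∀ h : H, P.map (G h) = gaussianReal 0 (‖h‖₊ ^ 2)) (u : H) :
    ∫ ω, rexp (-(G u) ω) ∂P = rexp (‖u‖ ^ 2 / 2) := by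
  have hae : AEMeasurable (⇑(G u)) P := (Lp.aestronglyMeasurable (G u)).aemeasurable
  have hsm : AEStronglyMeasurable (fun x : ℝ => rexp (-x)) (P.map (G u)) :=
    (Real.continuous_exp.comp continuous_neg).aestronglyMeasurable
  have h1 : ∫ ω, rexp (-(G u) ω) ∂P = ∫ x, rexp (-x) ∂(P.map (G u)) :=
    (integral_map hae hsm).symm
  rw [h1, hG u, integral_exp_neg_gaussianReal]
  norm_cast

lemma coeFn_G_comb (s t : ℝ) (g h : H) :
    (fun ω => s * (G g) ω + t * (G h) ω) =ᵐ[P] ⇑(G (s • g + t • h)) := by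
  have h1 : G (s • g + t • h) = s • G g + t • G h := by
    rw [map_add, LinearMap.map_smul, LinearMap.map_smul]
  rw [h1]
  filter_upwards [Lp.coeFn_add (s • G g) (t • G h), Lp.coeFn_smul s (G g),
    Lp.coeFn_smul t (G h)] with ω e1 e2 e3
  rw [e1, Pi.add_apply, e2, e3, Pi.smul_apply, Pi.smul_apply, smul_eq_mul, smul_eq_mul]

lemma exp_neg_comb_integrable (hG : ∀ h : H, P.map (G h) = gaussianReal 0 (‖h‖₊ ^ 2))
    (s t : ℝ) (g h : H) :
    Integrable (fun ω => rexp (-(s * (G g) ω + t * (G h) ω))) P := by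
  refine (exp_neg_G_integrable hG (s • g + t • h)).congr ?_
  filter_upwards [coeFn_G_comb (P := P) (G := G) s t g h] with ω e
  rw [e]

lemma exp_neg_comb_integral (hG : ∀ h : H, P.map (G h) = gaussianReal 0 (‖h‖₊ ^ 2))
    (s t : ℝ) (g h : H) :
    ∫ ω, rexp (-(s * (G g) ω + t * (G h) ω)) ∂P = rexp (‖s • g + t • h‖ ^ 2 / 2) := by
  rw [← exp_neg_G_integral hG (s • g + t • h)]
  refine integral_congr_ae ?_
  filter_upwards [coeFn_G_comb (P := P) (G := G) s t g h] with ω e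
  rw [e]

end GLemmas


section Aux2
set_option linter.unusedSectionVars false
variable {Ω : Type*} [MeasurableSpace Ω] {P : Measure Ω} [IsProbabilityMeasure P]
  {H : Type*} [NormedAddCommGroup H] [InnerProductSpace ℝ H]
  {G : H →ₗ[ℝ] Lp ℝ 2 P}

lemma moment_expand (hG : ∀ h : H, P.map (G h) = gaussianReal 0 (‖h‖₊ ^ 2))
    {n : ℕ} (hn : Even n) (g h : H) :
    Integrable (fun ω =>
        (rexp (-(G g) ω + ‖g‖ ^ 2 / 2) - rexp (-(G h) ω + ‖h‖ ^ 2 / 2)) ^ n) P ∧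
    ∫ ω, (rexp (-(G g) ω + ‖g‖ ^ 2 / 2) - rexp (-(G h) ω + ‖h‖ ^ 2 / 2)) ^ n ∂P
      = ∑ k ∈ Finset.range (n + 1),
          (-1 : ℝ) ^ k * (n.choose k) * rexp (((k : ℝ) * ‖g‖ ^ 2 + ((n - k : ℕ) : ℝ) * ‖h‖ ^ 2) / 2)
            * rexp (‖(k : ℝ) • g + ((n - k : ℕ) : ℝ) • h‖ ^ 2 / 2) := by
  set c : ℕ → ℝ := fun k =>
    (-1 : ℝ) ^ k * (n.choose k) * rexp (((k : ℝ) * ‖g‖ ^ 2 + ((n - k : ℕ) : ℝ) * ‖h‖ ^ 2) / 2)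
    with hc
  have hpt : ∀ ω, (rexp (-(G g) ω + ‖g‖ ^ 2 / 2) - rexp (-(G h) ω + ‖h‖ ^ 2 / 2)) ^ n
      = ∑ k ∈ Finset.range (n + 1),
          c k * rexp (-((k : ℝ) * (G g) ω + ((n - k : ℕ) : ℝ) * (G h) ω)) := by
    intro ω
    rw [sub_pow]
    refine Finset.sum_congr rfl fun k hk => ?_
    rw [← Real.exp_nat_mul, ← Real.exp_nat_mul, hc]
    have e1 : (-1 : ℝ) ^ (k + n) = (-1 : ℝ) ^ k := by
      rw [pow_add, hn.neg_one_pow, mul_one]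
    rw [e1]
    have e2 : (k : ℝ) * (-(G g) ω + ‖g‖ ^ 2 / 2) + ((n - k : ℕ) : ℝ) * (-(G h) ω + ‖h‖ ^ 2 / 2)
        = ((k : ℝ) * ‖g‖ ^ 2 + ((n - k : ℕ) : ℝ) * ‖h‖ ^ 2) / 2
          + -((k : ℝ) * (G g) ω + ((n - k : ℕ) : ℝ) * (G h) ω) := by ring
    rw [mul_assoc ((-1:ℝ)^k), ← Real.exp_add, e2, Real.exp_add]
    ring
  have hint : ∀ k ∈ Finset.range (n + 1), Integrable
      (fun ω => c k * rexp (-((k : ℝ) * (G g) ω + ((n - k : ℕ) : ℝ) * (G h) ω))) P :=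
    fun k _ => (exp_neg_comb_integrable hG _ _ g h).const_mul (c k)
  constructor
  · rw [show (fun ω => (rexp (-(G g) ω + ‖g‖ ^ 2 / 2) - rexp (-(G h) ω + ‖h‖ ^ 2 / 2)) ^ n)
        = fun ω => ∑ k ∈ Finset.range (n + 1),
            c k * rexp (-((k : ℝ) * (G g) ω + ((n - k : ℕ) : ℝ) * (G h) ω)) from funext hpt]
    exact integrable_finset_sum _ hint
  · rw [integral_congr_ae (ae_of_all _ hpt), integral_finset_sum _ hint]
    refine Finset.sum_congr rfl fun k hk => ?_
    rw [integral_const_mul, exp_neg_comb_integral hG]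

lemma Vfun_estimate (F : Ω → ℝ) (hF : Measurable F)
    (hG : ∀ h : H, P.map (G h) = gaussianReal 0 (‖h‖₊ ^ 2))
    (ε : ℝ) (hε : 0 < ε)
    (hmom : ∫⁻ ω, ENNReal.ofReal (|F ω| ^ (2 + ε)) ∂P < ⊤) (h : H) :
    ∃ B : H → ℝ≥0∞, Tendsto B (𝓝 h) (𝓝 0) ∧
      ∀ g, Vfun P F G g ≤ Vfun P F G h + B g := by
  classical
  -- exponents
  set p : ℝ := (2 + ε) / 2 with hp
  set q : ℝ := (2 + ε) / ε with hq
  have hε2 : (0:ℝ) < 2 + ε := by linarith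
  have hp1 : 1 < p := by rw [hp]; rw [lt_div_iff₀ (by norm_num : (0:ℝ) < 2)]; linarith
  have hq0 : 0 < q := div_pos hε2 hε
  have hpq : p.HolderConjugate q := by
    rw [Real.holderConjugate_iff]
    constructor
    · exact hp1
    · rw [hp, hq]
      field_simp
  set n : ℕ := 2 * (⌈q⌉₊ + 1) with hn_def
  have hn_even : Even n := ⟨⌈q⌉₊ + 1, by rw [hn_def]; ring⟩
  have hn_ne : n ≠ 0 := by positivity
  have hqn : q < (n : ℝ) := by
    have h1 : q ≤ (⌈q⌉₊ : ℝ) := Nat.le_ceil q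
    have h2 : ((⌈q⌉₊ : ℝ)) < n := by
      rw [hn_def]
      push_cast
      linarith
    linarith
  have hn_pos : (0:ℝ) < n := lt_trans hq0 hqn
  -- the Φ function
  set Φ : H → ℝ := fun g => ∑ k ∈ Finset.range (n + 1),
      (-1 : ℝ) ^ k * (n.choose k) * rexp (((k : ℝ) * ‖g‖ ^ 2 + ((n - k : ℕ) : ℝ) * ‖h‖ ^ 2) / 2)
        * rexp (‖(k : ℝ) • g + ((n - k : ℕ) : ℝ) • h‖ ^ 2 / 2) with hΦ
  have hΦcont : Continuous Φ := by
    rw [hΦ]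
    refine continuous_finset_sum _ fun k _ => ?_
    have c1 : Continuous fun g : H => rexp (((k : ℝ) * ‖g‖ ^ 2 + ((n - k : ℕ) : ℝ) * ‖h‖ ^ 2) / 2) := by
      fun_prop
    have c2 : Continuous fun g : H => rexp (‖(k : ℝ) • g + ((n - k : ℕ) : ℝ) • h‖ ^ 2 / 2) := by
      fun_prop
    exact (continuous_const.mul c1).mul c2
  have hΦh : Φ h = 0 := by
    have hterm : ∀ k ∈ Finset.range (n + 1),
        (-1 : ℝ) ^ k * (n.choose k) * rexp (((k : ℝ) * ‖h‖ ^ 2 + ((n - k : ℕ) : ℝ) * ‖h‖ ^ 2) / 2)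
          * rexp (‖(k : ℝ) • h + ((n - k : ℕ) : ℝ) • h‖ ^ 2 / 2)
        = ((-1 : ℝ) ^ k * (n.choose k)) *
            (rexp ((n : ℝ) * ‖h‖ ^ 2 / 2) * rexp (‖(n : ℝ) • h‖ ^ 2 / 2)) := by
      intro k hk
      have hkn : k ≤ n := Nat.lt_succ_iff.mp (Finset.mem_range.mp hk)
      have hcast : ((n - k : ℕ) : ℝ) = (n : ℝ) - (k : ℝ) := by
        rw [Nat.cast_sub hkn]
      rw [hcast]
      have e1 : (k : ℝ) • h + ((n : ℝ) - (k : ℝ)) • h = (n : ℝ) • h := by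
        rw [← add_smul]; ring_nf
      have e2 : ((k : ℝ) * ‖h‖ ^ 2 + ((n : ℝ) - (k : ℝ)) * ‖h‖ ^ 2) / 2 = (n : ℝ) * ‖h‖ ^ 2 / 2 := by
        ring
      rw [e1, e2]
      ring
    simp only [hΦ]
    rw [Finset.sum_congr rfl hterm, ← Finset.sum_mul]
    have hzero : (∑ k ∈ Finset.range (n + 1), (-1 : ℝ) ^ k * (n.choose k : ℝ)) = 0 := by
      have h1 := Int.alternating_sum_range_choose_of_ne hn_ne
      have h2 : ((∑ k ∈ Finset.range (n + 1), ((-1 : ℤ) ^ k * (n.choose k : ℤ)) : ℤ) : ℝ) = 0 := by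
        rw [h1]; norm_num
      rw [← h2]
      push_cast
      ring
    rw [hzero, zero_mul]
  -- the W functions
  set W : H → Ω → ℝ := fun u ω => rexp (-(G u) ω + ‖u‖ ^ 2 / 2) with hW
  have hWae : ∀ u : H, AEMeasurable (W u) P := by
    intro u
    have : AEMeasurable (⇑(G u)) P := (Lp.aestronglyMeasurable (G u)).aemeasurable
    exact (Real.measurable_exp.comp_aemeasurable (this.neg.add_const _))
  -- step: lintegral of |W g - W h| to the n equals ofReal (Φ g)
  have hmom_n : ∀ g : H, ∫⁻ ω, (ENNReal.ofReal |W g ω - W h ω|) ^ (n : ℝ) ∂P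
      = ENNReal.ofReal (Φ g) := by
    intro g
    obtain ⟨hint, hval⟩ := moment_expand hG hn_even g h
    have hpt : ∀ ω, (ENNReal.ofReal |W g ω - W h ω|) ^ (n : ℝ)
        = ENNReal.ofReal ((W g ω - W h ω) ^ n) := by
      intro ω
      rw [ENNReal.rpow_natCast, ← ENNReal.ofReal_pow (abs_nonneg _), hn_even.pow_abs]
    simp only [hpt]
    rw [← ofReal_integral_eq_lintegral_ofReal hint
      (ae_of_all _ fun ω => hn_even.pow_nonneg _)]
    rw [hval]
  -- the constant M
  set M : ℝ≥0∞ := (∫⁻ ω, ENNReal.ofReal (|F ω| ^ (2 + ε)) ∂P) ^ (1 / p) with hM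
  have hM_ne_top : M ≠ ⊤ := (ENNReal.rpow_lt_top_of_nonneg (by positivity) hmom.ne).ne
  -- measurability
  have hXae : ∀ g : H, AEMeasurable (fun ω => ENNReal.ofReal |W g ω - W h ω|) P :=
    fun g => (continuous_abs.measurable.comp_aemeasurable ((hWae g).sub (hWae h))).ennreal_ofReal
  have hFq : AEMeasurable (fun ω => ENNReal.ofReal ((F ω) ^ 2)) P :=
    ((hF.pow measurable_const).aemeasurable).ennreal_ofReal
  -- step 1 : pointwise triangle bound
  have hstep1 : ∀ g : H, Vfun P F G g ≤ Vfun P F G h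
      + ∫⁻ ω, ENNReal.ofReal ((F ω) ^ 2) * ENNReal.ofReal |W g ω - W h ω| ∂P := by
    intro g
    have hpt : ∀ ω, ENNReal.ofReal ((F ω) ^ 2 * W g ω)
        ≤ ENNReal.ofReal ((F ω) ^ 2 * W h ω)
          + ENNReal.ofReal ((F ω) ^ 2) * ENNReal.ofReal |W g ω - W h ω| := by
      intro ω
      rw [← ENNReal.ofReal_mul (sq_nonneg _),
        ← ENNReal.ofReal_add (by positivity) (by positivity)]
      apply ENNReal.ofReal_le_ofReal
      have h1 : W g ω ≤ W h ω + |W g ω - W h ω| := by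
        have := le_abs_self (W g ω - W h ω); linarith
      calc (F ω) ^ 2 * W g ω ≤ (F ω) ^ 2 * (W h ω + |W g ω - W h ω|) :=
            mul_le_mul_of_nonneg_left h1 (sq_nonneg _)
        _ = (F ω) ^ 2 * W h ω + (F ω) ^ 2 * |W g ω - W h ω| := by ring
    have ham : AEMeasurable (fun ω => ENNReal.ofReal ((F ω) ^ 2 * W h ω)) P :=
      (((hF.pow measurable_const).aemeasurable).mul (hWae h)).ennreal_ofReal
    calc Vfun P F G g = ∫⁻ ω, ENNReal.ofReal ((F ω) ^ 2 * W g ω) ∂P := rfl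
      _ ≤ ∫⁻ ω, (ENNReal.ofReal ((F ω) ^ 2 * W h ω)
            + ENNReal.ofReal ((F ω) ^ 2) * ENNReal.ofReal |W g ω - W h ω|) ∂P :=
          lintegral_mono hpt
      _ = Vfun P F G h
            + ∫⁻ ω, ENNReal.ofReal ((F ω) ^ 2) * ENNReal.ofReal |W g ω - W h ω| ∂P := by
          rw [lintegral_add_left' ham]
          rfl
  -- step 2 : Hoelder
  have hHolder1 : ∀ g : H,
      (∫⁻ ω, ENNReal.ofReal ((F ω) ^ 2) * ENNReal.ofReal |W g ω - W h ω| ∂P)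
        ≤ M * (∫⁻ ω, (ENNReal.ofReal |W g ω - W h ω|) ^ q ∂P) ^ (1 / q) := by
    intro g
    have h2 := ENNReal.lintegral_mul_le_Lp_mul_Lq P hpq hFq (hXae g)
    simp only [Pi.mul_apply] at h2
    have hFp : ∫⁻ ω, (ENNReal.ofReal ((F ω) ^ 2)) ^ p ∂P
        = ∫⁻ ω, ENNReal.ofReal (|F ω| ^ (2 + ε)) ∂P := by
      refine lintegral_congr fun ω => ?_
      rw [ENNReal.ofReal_rpow_of_nonneg (sq_nonneg _) (by positivity : (0:ℝ) ≤ p)]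
      congr 1
      rw [← sq_abs (F ω), ← Real.rpow_natCast |F ω| 2, ← Real.rpow_mul (abs_nonneg _)]
      congr 1
      push_cast
      rw [hp]
      field_simp
    rwa [hFp] at h2
  -- step 3 : exponent bump from q to n
  have hbump : ∀ g : H,
      (∫⁻ ω, (ENNReal.ofReal |W g ω - W h ω|) ^ q ∂P) ^ (1 / q)
        ≤ (ENNReal.ofReal (Φ g)) ^ (1 / (n : ℝ)) := by
    intro g
    set X : Ω → ℝ≥0∞ := fun ω => ENNReal.ofReal |W g ω - W h ω| with hX
    set r : ℝ := (n : ℝ) / q with hr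
    have hr1 : 1 < r := by rw [hr, lt_div_iff₀ hq0]; linarith
    have hrr : r.HolderConjugate (r / (r - 1)) := Real.HolderConjugate.conjExponent hr1
    have hXq : AEMeasurable (fun ω => X ω ^ q) P := (hXae g).pow aemeasurable_const
    have key : ∫⁻ ω, X ω ^ q ∂P ≤ (∫⁻ ω, X ω ^ (n : ℝ) ∂P) ^ (1 / r) := by
      have h2 := ENNReal.lintegral_mul_le_Lp_mul_Lq P hrr hXq
        (aemeasurable_const (b := (1 : ℝ≥0∞)))
      simp only [Pi.mul_apply, mul_one, ENNReal.one_rpow, lintegral_one, measure_univ,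
        ENNReal.one_rpow] at h2
      have e3 : ∀ ω, (X ω ^ q) ^ r = X ω ^ (n : ℝ) := by
        intro ω
        rw [← ENNReal.rpow_mul]
        congr 1
        rw [hr]
        field_simp
      simp only [e3] at h2
      simpa using h2
    calc (∫⁻ ω, X ω ^ q ∂P) ^ (1 / q)
        ≤ ((∫⁻ ω, X ω ^ (n : ℝ) ∂P) ^ (1 / r)) ^ (1 / q) :=
          ENNReal.rpow_le_rpow key (by positivity)
      _ = (∫⁻ ω, X ω ^ (n : ℝ) ∂P) ^ (1 / (n : ℝ)) := by
          rw [← ENNReal.rpow_mul]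
          congr 1
          rw [hr]
          have hqne : q ≠ 0 := ne_of_gt hq0
          have hnne : (n : ℝ) ≠ 0 := ne_of_gt hn_pos
          field_simp
      _ = (ENNReal.ofReal (Φ g)) ^ (1 / (n : ℝ)) := by rw [hmom_n g]
  -- assemble
  refine ⟨fun g => M * (ENNReal.ofReal (Φ g)) ^ (1 / (n : ℝ)), ?_, ?_⟩
  · have h1 : Tendsto (fun g => ENNReal.ofReal (Φ g)) (𝓝 h) (𝓝 0) := by
      have h2 := (ENNReal.continuous_ofReal.tendsto (Φ h)).comp (hΦcont.tendsto h)
      rw [hΦh] at h2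
      simpa [Function.comp_def] using h2
    exact (ENNReal.tendsto_const_mul_rpow_nhds_zero_of_pos hM_ne_top
      (by positivity : (0:ℝ) < 1 / (n : ℝ))).comp h1
  · intro g
    calc Vfun P F G g
        ≤ Vfun P F G h + ∫⁻ ω, ENNReal.ofReal ((F ω) ^ 2) * ENNReal.ofReal |W g ω - W h ω| ∂P :=
          hstep1 g
      _ ≤ Vfun P F G h + M * (∫⁻ ω, (ENNReal.ofReal |W g ω - W h ω|) ^ q ∂P) ^ (1 / q) :=
          add_le_add le_rfl (hHolder1 g)
      _ ≤ Vfun P F G h + M * (ENNReal.ofReal (Φ g)) ^ (1 / (n : ℝ)) :=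
          add_le_add le_rfl (mul_le_mul_right (hbump g) M)


end Aux2

/-- The minimal value of `V` can be approached along a sequence from any dense subset
`D ⊆ H` (e.g. drifts generated by feedforward neural networks). -/
theorem stmt_17 {Ω : Type*} [MeasurableSpace Ω] (P : Measure Ω) [IsProbabilityMeasure P]
    {H : Type*} [NormedAddCommGroup H] [InnerProductSpace ℝ H] [CompleteSpace H]
    [TopologicalSpace.SeparableSpace H]
    (F : Ω → ℝ) (hF : Measurable F)
    (G : H →ₗ[ℝ] Lp ℝ 2 P)
    (hG : ∀ h : H, P.map (G h) = gaussianReal 0 (‖h‖₊ ^ 2))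
    (hFpos : 0 < P {ω | 0 < (F ω) ^ 2})
    (ε : ℝ) (hε : 0 < ε)
    (hmom : ∫⁻ ω, ENNReal.ofReal (|F ω| ^ (2 + ε)) ∂P < ⊤)
    (D : Set H) (hD : Dense D) :
    ∃ hn : ℕ → H, (∀ n, hn n ∈ D) ∧
      Tendsto (fun n => Vfun P F G (hn n)) atTop (nhds (⨅ h : H, Vfun P F G h)) := by
  classical
  set V : H → ℝ≥0∞ := fun g => Vfun P F G g with hV
  have hD_ne : D.Nonempty := hD.nonempty
  obtain ⟨u, -, hu_t, hu_mem⟩ := exists_seq_tendsto_sInf (hD_ne.image V) (OrderBot.bddBelow _)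
  choose d hdD hdV using fun k => hu_mem k
  have key : ∀ h' : H, sInf (V '' D) ≤ V h' := by
    intro h'
    obtain ⟨B, hB0, hBle⟩ := Vfun_estimate F hF hG ε hε hmom h'
    obtain ⟨e, heD, he_t⟩ := mem_closure_iff_seq_limit.mp (hD h')
    have h1 : Tendsto (fun k => V h' + B (e k)) atTop (𝓝 (V h' + 0)) :=
      Tendsto.add tendsto_const_nhds (hB0.comp he_t)
    rw [add_zero] at h1
    refine ge_of_tendsto h1 (Eventually.of_forall fun k => ?_)
    calc sInf (V '' D) ≤ V (e k) := csInf_le (OrderBot.bddBelow _) ⟨e k, heD k, rfl⟩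
      _ ≤ V h' + B (e k) := hBle (e k)
  have hinf : sInf (V '' D) = ⨅ h', V h' := by
    refine le_antisymm (le_iInf key) (le_sInf ?_)
    rintro b ⟨x, -, rfl⟩
    exact iInf_le _ x
  refine ⟨d, hdD, ?_⟩
  have : (fun k => Vfun P F G (d k)) = u := funext hdV
  rw [this, ← hinf]
  exact hu_t
end
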